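/- If D is a real diagonal matrix with nonnegative entries and M is a real antisymmetric matrix, then every complex eigenvalue λ of the product DM satisfies Re(λ) = 0. -/
import Mathlib


open Matrix

/-- If `D` is real diagonal with nonnegative entries and `M` is real antisymmetric,
then every complex eigenvalue of `D * M` is purely imaginary. -/
theorem stmt_3 (n : ℕ) (D M : Matrix (Fin n) (Fin n) ℝ)
    (hDdiag : D.IsDiag) (hDpos : ∀ i, 0 ≤ D i i) (hM : Mᵀ = -M)
    (lam : ℂ) (hlam : lam ∈ spectrum ℂ ((D * M).map Complex.ofReal)) :
    lam.re = 0 := by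
  classical
  by_cases hl0 : lam = 0
  · simp [hl0]
  -- extract an eigenvector
  set A : Matrix (Fin n) (Fin n) ℂ := (D * M).map Complex.ofReal with hA
  have hnu : ¬ IsUnit (lam • (1 : Matrix (Fin n) (Fin n) ℂ) - A) := by
    rw [spectrum.mem_iff] at hlam
    simpa [Algebra.algebraMap_eq_smul_one] using hlam
  have hdet : (lam • (1 : Matrix (Fin n) (Fin n) ℂ) - A).det = 0 := by
    by_contra h
    exact hnu ((Matrix.isUnit_iff_isUnit_det _).2 (isUnit_iff_ne_zero.2 h))
  obtain ⟨v, hv, hv0⟩ := (Matrix.exists_mulVec_eq_zero_iff).2 hdet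
  have hAv : A.mulVec v = lam • v := by
    have h1 : (lam • (1 : Matrix (Fin n) (Fin n) ℂ)).mulVec v - A.mulVec v = 0 := by
      rw [← Matrix.sub_mulVec]; exact hv0
    have h2 : (lam • (1 : Matrix (Fin n) (Fin n) ℂ)).mulVec v = lam • v := by
      rw [Matrix.smul_mulVec, Matrix.one_mulVec]
    rw [h2] at h1
    exact (sub_eq_zero.mp h1).symm
  -- set up the square root of D and the skew-Hermitian matrix B = C M C
  set c : Fin n → ℂ := fun i => ((Real.sqrt (D i i) : ℝ) : ℂ) with hc
  set Cm : Matrix (Fin n) (Fin n) ℂ := Matrix.diagonal c with hCm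
  set M' : Matrix (Fin n) (Fin n) ℂ := M.map Complex.ofReal with hM'
  have hDC : D.map Complex.ofReal = Cm * Cm := by
    rw [hCm, Matrix.diagonal_mul_diagonal]
    ext i j
    by_cases hij : i = j
    · subst hij
      simp [hc, Matrix.diagonal_apply_eq, ← Complex.ofReal_mul,
        Real.mul_self_sqrt (hDpos i)]
    · simp [Matrix.map_apply, Matrix.diagonal_apply_ne _ hij, hDdiag hij]
  have hAfact : A = Cm * Cm * M' := by
    rw [hA, ← hDC]
    ext i j
    simp [Matrix.map_apply, Matrix.mul_apply, M']
  -- skew-Hermitian properties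
  have hM'skew : M'ᴴ = -M' := by
    ext i j
    have : M j i = -M i j := by
      have := congrFun (congrFun hM i) j
      simpa [Matrix.transpose_apply, Matrix.neg_apply] using this
    simp [hM', Matrix.conjTranspose_apply, Matrix.map_apply, this]
  have hCH : Cmᴴ = Cm := by
    ext i j
    by_cases hij : i = j
    · subst hij
      simp [hCm, Matrix.conjTranspose_apply, Matrix.diagonal_apply_eq, hc,
        Complex.conj_ofReal]
    · simp [hCm, Matrix.conjTranspose_apply, Matrix.diagonal_apply_ne _ hij,
        Matrix.diagonal_apply_ne _ (Ne.symm hij)]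
  set B : Matrix (Fin n) (Fin n) ℂ := Cm * M' * Cm with hB
  have hBskew : Bᴴ = -B := by
    rw [hB, Matrix.conjTranspose_mul, Matrix.conjTranspose_mul, hCH, hM'skew]
    noncomm_ring
  -- u = C M v is an eigenvector of B for lam
  set u : Fin n → ℂ := (Cm * M').mulVec v with hu
  have hBu : B.mulVec u = lam • u := by
    rw [hu, Matrix.mulVec_mulVec, hB]
    have : Cm * M' * Cm * (Cm * M') = Cm * M' * A := by
      rw [hAfact]; noncomm_ring
    rw [this, ← Matrix.mulVec_mulVec, hAv, Matrix.mulVec_smul]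
  have hu0 : u ≠ 0 := by
    intro h
    have : A.mulVec v = Cm.mulVec u := by
      rw [hu, Matrix.mulVec_mulVec, hAfact, mul_assoc]
    rw [h, Matrix.mulVec_zero, hAv] at this
    exact hv (by simpa [smul_eq_zero, hl0] using this)
  -- quadratic form
  set s : ℂ := star u ⬝ᵥ u with hs
  set r : ℂ := star u ⬝ᵥ B.mulVec u with hr
  have hrs : r = lam * s := by
    rw [hr, hBu, dotProduct_smul, hs, smul_eq_mul]
  have hrskew : star r = -r := by
    rw [hr, ← Matrix.star_dotProduct_star (B.mulVec u) (star u), star_star,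
      Matrix.star_mulVec, hBskew, ← Matrix.dotProduct_mulVec,
      Matrix.neg_mulVec, dotProduct_neg]
  have hs_eq : s = ((∑ i, Complex.normSq (u i) : ℝ) : ℂ) := by
    rw [hs]
    simp only [dotProduct, Pi.star_apply, Complex.star_def, Complex.ofReal_sum]
    refine Finset.sum_congr rfl fun i _ => ?_
    rw [mul_comm, Complex.mul_conj]
  have hspos : 0 < s.re := by
    rw [hs_eq, Complex.ofReal_re]
    obtain ⟨i, hi⟩ : ∃ i, u i ≠ 0 := by
      by_contra h
      push_neg at h
      exact hu0 (funext h)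
    exact Finset.sum_pos' (fun j _ => Complex.normSq_nonneg _)
      ⟨i, Finset.mem_univ i, Complex.normSq_pos.2 hi⟩
  have hsim : s.im = 0 := by rw [hs_eq, Complex.ofReal_im]
  have hre0 : r.re = 0 := by
    have : (star r).re = r.re := by simp [Complex.star_def]
    rw [hrskew, Complex.neg_re] at this
    linarith
  have : lam.re * s.re = 0 := by
    have := hre0
    rw [hrs, Complex.mul_re, hsim, mul_zero, sub_zero] at this
    exact this
  exact (mul_eq_zero.1 this).resolve_right (ne_of_gt hspos)
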